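/- Fix c > 0 and k ∈ ℕ with k > 1, and let φ̂_k(ξ) = |ξ|^{-k} K_k(c|ξ|). Then Σ_{m∈ℤ} Σ_{n≠m} ∫_{-π}^{π} [φ̂_k(ξ+2πm)/φ̂_k(ξ)] · [|φ̂_k'(ξ+2πn)|/|φ̂_k'(ξ)|] dξ is bounded by a constant independent of k. -/

import Mathlib

open Real MeasureTheory Set

noncomputable def macdonaldK (a u : ℝ) : ℝ :=
  ∫ t in Set.Ioi (0 : ℝ), Real.exp (-u * Real.cosh t) * Real.cosh (a * t)

namespace S17

lemma cosh_quad (t : ℝ) (ht : 0 ≤ t) : t ^ 2 / 8 ≤ Real.cosh t := by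
  have h1 : 1 + t/2 ≤ Real.exp (t/2) := by
    have := Real.add_one_le_exp (t/2); linarith
  have h2 : (1 + t/2)^2 ≤ Real.exp t := by
    calc (1 + t/2)^2 ≤ Real.exp (t/2) ^ 2 := by
          apply pow_le_pow_left₀ (by linarith) h1
      _ = Real.exp t := by rw [sq, ← Real.exp_add]; norm_num
  have h3 : Real.exp t / 2 ≤ Real.cosh t := by
    rw [Real.cosh_eq]
    have := (Real.exp_pos (-t)).le
    linarith
  nlinarith [sq_nonneg t]

lemma cosh_le_exp_abs' (x : ℝ) : Real.cosh x ≤ Real.exp |x| := by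
  rw [Real.cosh_eq]
  have h1 := Real.exp_le_exp.2 (le_abs_self x)
  have h2 := Real.exp_le_exp.2 (neg_le_abs x)
  linarith

/-- pointwise exponential bound for the Macdonald integrand -/
lemma integrand_le (a u t : ℝ) (hu : 0 < u) (ht : 0 ≤ t) :
    Real.exp (-u * Real.cosh t) * Real.cosh (a * t)
      ≤ Real.exp ((2*(|a|+1))^2 / u) * Real.exp (-t) := by
  have hcosh : Real.cosh (a*t) ≤ Real.exp (|a| * t) := by
    calc Real.cosh (a*t) ≤ Real.exp |a*t| := cosh_le_exp_abs' _
      _ = Real.exp (|a| * t) := by rw [abs_mul, abs_of_nonneg ht]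
  have key : |a| * t - u * Real.cosh t ≤ (2*(|a|+1))^2 / u - t := by
    have hq := cosh_quad t ht
    have h1 : u * (t^2/8) ≤ u * Real.cosh t := by
      apply mul_le_mul_of_nonneg_left hq hu.le
    rw [div_sub' hu.ne', le_div_iff₀ hu]
    nlinarith [sq_nonneg (u * t - 4*(|a|+1)), sq_nonneg (u*t), abs_nonneg a, sq_nonneg (|a|+1)]
  calc Real.exp (-u * Real.cosh t) * Real.cosh (a * t)
      ≤ Real.exp (-u * Real.cosh t) * Real.exp (|a| * t) := by
        apply mul_le_mul_of_nonneg_left hcosh (Real.exp_pos _).le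
    _ = Real.exp (|a| * t - u * Real.cosh t) := by rw [← Real.exp_add]; ring_nf
    _ ≤ Real.exp ((2*(|a|+1))^2 / u - t) := Real.exp_le_exp.2 key
    _ = _ := by rw [← Real.exp_add]; ring_nf

lemma integrand_nonneg (a u t : ℝ) : 0 ≤ Real.exp (-u * Real.cosh t) * Real.cosh (a * t) :=
  mul_nonneg (Real.exp_pos _).le (Real.cosh_pos _).le

lemma integrableK (a u : ℝ) (hu : 0 < u) :
    IntegrableOn (fun t => Real.exp (-u * Real.cosh t) * Real.cosh (a * t)) (Ioi 0) := by
  have hcont : Continuous (fun t => Real.exp (-u * Real.cosh t) * Real.cosh (a * t)) := by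
    continuity
  have hbase : IntegrableOn (fun t : ℝ => Real.exp ((2*(|a|+1))^2 / u) * Real.exp (-(1:ℝ) * t))
      (Ioi 0) := (exp_neg_integrableOn_Ioi 0 one_pos).const_mul _
  refine Integrable.mono hbase hcont.aestronglyMeasurable ?_
  filter_upwards [ae_restrict_mem measurableSet_Ioi] with t ht
  rw [Real.norm_eq_abs, Real.norm_eq_abs, abs_of_nonneg (integrand_nonneg a u t),
    abs_of_nonneg (by positivity)]
  simpa using integrand_le a u t hu (le_of_lt ht)

lemma K_nonneg (a u : ℝ) : 0 ≤ macdonaldK a u :=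
  setIntegral_nonneg measurableSet_Ioi fun t _ => integrand_nonneg a u t

lemma K_pos (a u : ℝ) (hu : 0 < u) : 0 < macdonaldK a u := by
  rw [macdonaldK, setIntegral_pos_iff_support_of_nonneg_ae]
  · have : (Function.support fun t => Real.exp (-u * Real.cosh t) * Real.cosh (a * t)) = univ := by
      ext t; simp [Function.mem_support]
      positivity
    rw [this]
    simp [Real.volume_Ioi]
  · filter_upwards with t using integrand_nonneg a u t
  · exact integrableK a u hu

lemma K_anti (a u v : ℝ) (hu : 0 < u) (huv : u ≤ v) : macdonaldK a v ≤ macdonaldK a u := by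
  apply setIntegral_mono_on ((integrableK a u hu).mono' ?_ ?_) (integrableK a u hu)
    measurableSet_Ioi
  · intro t ht
    have : Real.exp (-v * Real.cosh t) ≤ Real.exp (-u * Real.cosh t) := by
      apply Real.exp_le_exp.2
      nlinarith [Real.cosh_pos t]
    exact mul_le_mul_of_nonneg_right this (Real.cosh_pos _).le
  · exact (by continuity : Continuous fun t => Real.exp (-v * Real.cosh t) * Real.cosh (a * t)).aestronglyMeasurable
  · filter_upwards [ae_restrict_mem measurableSet_Ioi] with t ht
    rw [Real.norm_eq_abs, abs_of_nonneg (integrand_nonneg a v t)]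
    have : Real.exp (-v * Real.cosh t) ≤ Real.exp (-u * Real.cosh t) := by
      apply Real.exp_le_exp.2; nlinarith [Real.cosh_pos t]
    exact mul_le_mul_of_nonneg_right this (Real.cosh_pos _).le

lemma cosh_mul_cosh (a t : ℝ) :
    Real.cosh t * Real.cosh (a * t) = (Real.cosh ((a+1)*t) + Real.cosh ((a-1)*t)) / 2 := by
  have h1 : (a+1)*t = a*t + t := by ring
  have h2 : (a-1)*t = a*t - t := by ring
  rw [h1, h2, Real.cosh_add, Real.cosh_sub]
  ring

lemma integrable_coshMul (a u : ℝ) (hu : 0 < u) :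
    IntegrableOn (fun t => Real.cosh t * (Real.exp (-u * Real.cosh t) * Real.cosh (a * t)))
      (Ioi 0) := by
  have h := ((integrableK (a+1) u hu).add (integrableK (a-1) u hu)).div_const 2
  refine h.congr ?_
  filter_upwards with t
  rw [show Real.cosh t * (Real.exp (-u * Real.cosh t) * Real.cosh (a * t))
      = Real.exp (-u * Real.cosh t) * (Real.cosh t * Real.cosh (a*t)) by ring, cosh_mul_cosh]
  simp only [Pi.add_apply]
  ring

/-- integrand for the derivative -/
noncomputable def g (k c x t : ℝ) : ℝ :=
  (k * x ^ (-k-1) + c * Real.cosh t * x ^ (-k)) *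
    (Real.exp (-(c*x) * Real.cosh t) * Real.cosh (k * t))

noncomputable def Gfun (k c x : ℝ) : ℝ := ∫ t in Ioi (0:ℝ), g k c x t

lemma g_nonneg (k c x t : ℝ) (hk : 0 ≤ k) (hc : 0 ≤ c) (hx : 0 < x) : 0 ≤ g k c x t := by
  unfold g
  have := Real.cosh_pos t
  have := Real.cosh_pos (k*t)
  have h1 : (0:ℝ) ≤ x ^ (-k-1) := (Real.rpow_pos_of_pos hx _).le
  have h2 : (0:ℝ) ≤ x ^ (-k) := (Real.rpow_pos_of_pos hx _).le
  positivity

lemma integrable_g (k c x : ℝ) (hc : 0 < c) (hx : 0 < x) :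
    IntegrableOn (fun t => g k c x t) (Ioi 0) := by
  have h1 : IntegrableOn (fun t => (k * x ^ (-k-1)) *
      (Real.exp (-(c*x) * Real.cosh t) * Real.cosh (k * t))) (Ioi 0) :=
    (integrableK k (c*x) (by positivity)).const_mul _
  have h2 : IntegrableOn (fun t => (c * x ^ (-k)) *
      (Real.cosh t * (Real.exp (-(c*x) * Real.cosh t) * Real.cosh (k * t)))) (Ioi 0) :=
    (integrable_coshMul k (c*x) (by positivity)).const_mul _
  refine (h1.add h2).congr ?_
  filter_upwards with t
  unfold g
  simp only [Pi.add_apply]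
  ring

lemma g_cont (k c x : ℝ) : Continuous (fun t => g k c x t) := by
  unfold g; continuity

lemma Gfun_nonneg (k c x : ℝ) (hk : 0 ≤ k) (hc : 0 ≤ c) (hx : 0 < x) : 0 ≤ Gfun k c x :=
  setIntegral_nonneg measurableSet_Ioi fun t _ => g_nonneg k c x t hk hc hx

end S17

namespace S17b
open S17

/-- ratio bound for `Fval x = x^{-k} K_k(cx)` -/
lemma Fval_ratio (k : ℕ) (hk : 2 ≤ k) (c x τ y : ℝ) (hc : 0 < c) (hx : 0 < x)
    (hτ : 1 ≤ τ) (hy : τ * x ≤ y) :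
    y ^ (-(k:ℝ)) * macdonaldK k (c*y) ≤ (τ^2)⁻¹ * (x ^ (-(k:ℝ)) * macdonaldK k (c*x)) := by
  have hy0 : 0 < y := lt_of_lt_of_le (by nlinarith) hy
  have hxy : x ≤ y := by nlinarith
  have h1 : y ^ (-(k:ℝ)) ≤ (τ*x) ^ (-(k:ℝ)) :=
    Real.rpow_le_rpow_of_nonpos (by positivity) hy (neg_nonpos.mpr (Nat.cast_nonneg k))
  have h2 : (τ*x) ^ (-(k:ℝ)) = τ ^ (-(k:ℝ)) * x ^ (-(k:ℝ)) :=
    Real.mul_rpow (by linarith) hx.le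
  have hτ0 : (0:ℝ) < τ := lt_of_lt_of_le one_pos hτ
  have e2 : τ ^ (-(2:ℝ)) = (τ^2)⁻¹ := by
    rw [show (-(2:ℝ)) = ((-2 : ℤ) : ℝ) by norm_num, Real.rpow_intCast]
    simp [zpow_neg]
  have h3 : τ ^ (-(k:ℝ)) ≤ (τ^2)⁻¹ := by
    rw [← e2]
    apply Real.rpow_le_rpow_of_exponent_le hτ
    nlinarith [(show (2:ℝ) ≤ (k:ℝ) by exact_mod_cast hk)]
  have h4 : macdonaldK k (c*y) ≤ macdonaldK k (c*x) :=
    K_anti _ _ _ (by positivity) (mul_le_mul_of_nonneg_left hxy hc.le)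
  calc y ^ (-(k:ℝ)) * macdonaldK k (c*y)
      ≤ (τ ^ (-(k:ℝ)) * x ^ (-(k:ℝ))) * macdonaldK k (c*x) := by
        rw [← h2]
        apply mul_le_mul (h1.trans_eq rfl) h4 (K_nonneg _ _) (by positivity)
    _ ≤ ((τ^2)⁻¹ * x ^ (-(k:ℝ))) * macdonaldK k (c*x) := by
        apply mul_le_mul_of_nonneg_right _ (K_nonneg _ _)
        exact mul_le_mul_of_nonneg_right h3 (Real.rpow_pos_of_pos hx _).le
    _ = _ := by ring

lemma g_ratio (k : ℕ) (hk : 2 ≤ k) (c x τ y t : ℝ) (hc : 0 < c) (hx : 0 < x)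
    (hτ : 1 ≤ τ) (hy : τ * x ≤ y) (ht : (0:ℝ) ≤ t) :
    g k c y t ≤ (τ^2)⁻¹ * g k c x t := by
  have hy0 : 0 < y := lt_of_lt_of_le (by nlinarith) hy
  have hτ0 : (0:ℝ) < τ := lt_of_lt_of_le one_pos hτ
  have e2 : τ ^ (-(2:ℝ)) = (τ^2)⁻¹ := by
    rw [show (-(2:ℝ)) = ((-2 : ℤ) : ℝ) by norm_num, Real.rpow_intCast]
    simp [zpow_neg]
  have hτk : τ ^ (-(k:ℝ)) ≤ (τ^2)⁻¹ := by
    rw [← e2]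
    apply Real.rpow_le_rpow_of_exponent_le hτ
    nlinarith [(show (2:ℝ) ≤ (k:ℝ) by exact_mod_cast hk)]
  have hτk1 : τ ^ (-(k:ℝ)-1) ≤ (τ^2)⁻¹ := by
    refine le_trans ?_ hτk
    apply Real.rpow_le_rpow_of_exponent_le hτ; linarith
  have hxy : x ≤ y := by nlinarith
  have hnp1 : (-(k:ℝ)-1) ≤ 0 := by
    have := (Nat.cast_nonneg k : (0:ℝ) ≤ (k:ℝ)); linarith
  have hnp2 : (-(k:ℝ)) ≤ 0 := neg_nonpos.mpr (Nat.cast_nonneg k)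
  have h1 : y ^ (-(k:ℝ)-1) ≤ (τ^2)⁻¹ * x ^ (-(k:ℝ)-1) := by
    calc y ^ (-(k:ℝ)-1) ≤ (τ*x) ^ (-(k:ℝ)-1) :=
          Real.rpow_le_rpow_of_nonpos (by positivity) hy hnp1
      _ = τ ^ (-(k:ℝ)-1) * x ^ (-(k:ℝ)-1) := Real.mul_rpow (by linarith) hx.le
      _ ≤ _ := mul_le_mul_of_nonneg_right hτk1 (Real.rpow_pos_of_pos hx _).le
  have h2 : y ^ (-(k:ℝ)) ≤ (τ^2)⁻¹ * x ^ (-(k:ℝ)) := by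
    calc y ^ (-(k:ℝ)) ≤ (τ*x) ^ (-(k:ℝ)) :=
          Real.rpow_le_rpow_of_nonpos (by positivity) hy hnp2
      _ = τ ^ (-(k:ℝ)) * x ^ (-(k:ℝ)) := Real.mul_rpow (by linarith) hx.le
      _ ≤ _ := mul_le_mul_of_nonneg_right hτk (Real.rpow_pos_of_pos hx _).le
  have hexp : Real.exp (-(c*y) * Real.cosh t) ≤ Real.exp (-(c*x) * Real.cosh t) := by
    apply Real.exp_le_exp.2
    nlinarith [mul_nonneg (mul_nonneg hc.le (sub_nonneg.2 hxy)) (Real.cosh_pos t).le]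
  unfold g
  have hck : (0:ℝ) ≤ (k:ℝ) := Nat.cast_nonneg k
  have hcosht := Real.cosh_pos t
  have hcoshkt := Real.cosh_pos ((k:ℝ)*t)
  have hA : (k:ℝ) * y ^ (-(k:ℝ)-1) + c * Real.cosh t * y ^ (-(k:ℝ))
      ≤ (τ^2)⁻¹ * ((k:ℝ) * x ^ (-(k:ℝ)-1) + c * Real.cosh t * x ^ (-(k:ℝ))) := by
    have t1 : (k:ℝ) * y ^ (-(k:ℝ)-1) ≤ (τ^2)⁻¹ * ((k:ℝ) * x ^ (-(k:ℝ)-1)) :=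
      (mul_le_mul_of_nonneg_left h1 hck).trans_eq (by ring)
    have t2 : c * Real.cosh t * y ^ (-(k:ℝ)) ≤ (τ^2)⁻¹ * (c * Real.cosh t * x ^ (-(k:ℝ))) :=
      (mul_le_mul_of_nonneg_left h2 (mul_nonneg hc.le hcosht.le)).trans_eq (by ring)
    calc _ ≤ (τ^2)⁻¹ * ((k:ℝ) * x ^ (-(k:ℝ)-1)) + (τ^2)⁻¹ * (c * Real.cosh t * x ^ (-(k:ℝ))) :=
          add_le_add t1 t2
      _ = _ := by ring
  calc (k * y ^ (-(k:ℝ)-1) + c * Real.cosh t * y ^ (-(k:ℝ))) *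
        (Real.exp (-(c*y) * Real.cosh t) * Real.cosh ((k:ℝ) * t))
      ≤ ((τ^2)⁻¹ * ((k:ℝ) * x ^ (-(k:ℝ)-1) + c * Real.cosh t * x ^ (-(k:ℝ)))) *
        (Real.exp (-(c*x) * Real.cosh t) * Real.cosh ((k:ℝ) * t)) := by
        apply mul_le_mul hA
        · exact mul_le_mul_of_nonneg_right hexp hcoshkt.le
        · positivity
        · have h1' : (0:ℝ) ≤ x ^ (-(k:ℝ)-1) := (Real.rpow_pos_of_pos hx _).le
          have h2' : (0:ℝ) ≤ x ^ (-(k:ℝ)) := (Real.rpow_pos_of_pos hx _).le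
          positivity
    _ = _ := by ring

lemma Gfun_ratio (k : ℕ) (hk : 2 ≤ k) (c x τ y : ℝ) (hc : 0 < c) (hx : 0 < x)
    (hτ : 1 ≤ τ) (hy : τ * x ≤ y) :
    Gfun k c y ≤ (τ^2)⁻¹ * Gfun k c x := by
  have hy0 : 0 < y := lt_of_lt_of_le (by nlinarith) hy
  rw [Gfun, Gfun, ← MeasureTheory.integral_const_mul]
  apply integral_mono_of_nonneg
  · filter_upwards with t using g_nonneg _ _ _ _ (Nat.cast_nonneg k) hc.le hy0
  · exact (integrable_g k c x hc hx).const_mul _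
  · filter_upwards [ae_restrict_mem measurableSet_Ioi] with t ht
    exact g_ratio k hk c x τ y t hc hx hτ hy (le_of_lt ht)

lemma Gfun_pos (k : ℕ) (hk : 2 ≤ k) (c x : ℝ) (hc : 0 < c) (hx : 0 < x) :
    0 < Gfun k c x := by
  have hkey : (k:ℝ) * x ^ (-(k:ℝ)-1) * macdonaldK k (c*x) ≤ Gfun k c x := by
    rw [Gfun, macdonaldK, ← MeasureTheory.integral_const_mul]
    apply integral_mono_of_nonneg
    · filter_upwards with t
      have : (0:ℝ) ≤ x ^ (-(k:ℝ)-1) := (Real.rpow_pos_of_pos hx _).le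
      have := Real.cosh_pos ((k:ℝ)*t)
      have := Real.exp_pos (-(c*x) * Real.cosh t)
      have hkk : (0:ℝ) ≤ (k:ℝ) := Nat.cast_nonneg k
      positivity
    · exact integrable_g k c x hc hx
    · filter_upwards with t
      unfold g
      rw [show -(c*x) = -(c*x) by rfl]
      have h1 : (0:ℝ) ≤ c * Real.cosh t * x ^ (-(k:ℝ)) := by
        have : (0:ℝ) ≤ x ^ (-(k:ℝ)) := (Real.rpow_pos_of_pos hx _).le
        have := Real.cosh_pos t
        positivity
      have h2 : (0:ℝ) ≤ Real.exp (-(c*x) * Real.cosh t) * Real.cosh ((k:ℝ)*t) := by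
        have := Real.cosh_pos ((k:ℝ)*t); positivity
      nlinarith
  have : (0:ℝ) < (k:ℝ) * x ^ (-(k:ℝ)-1) * macdonaldK k (c*x) := by
    have hK := K_pos (k:ℝ) (c*x) (by positivity)
    have : (0:ℝ) < x ^ (-(k:ℝ)-1) := Real.rpow_pos_of_pos hx _
    have hk0 : (0:ℝ) < (k:ℝ) := by exact_mod_cast lt_of_lt_of_le two_pos hk
    positivity
  linarith

end S17b

namespace S17c
open S17 S17b

lemma hasDerivAt_Fval (k : ℕ) (hk : 2 ≤ k) (c x : ℝ) (hc : 0 < c) (hx : 0 < x) :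
    HasDerivAt (fun y => y ^ (-(k:ℝ)) * macdonaldK k (c*y)) (-(Gfun k c x)) x := by
  have hε : (0:ℝ) < x/2 := by linarith
  have hmain := hasDerivAt_integral_of_dominated_loc_of_deriv_le
    (μ := volume.restrict (Ioi (0:ℝ)))
    (F := fun y t => y ^ (-(k:ℝ)) * (Real.exp (-(c*y) * Real.cosh t) * Real.cosh ((k:ℝ) * t)))
    (F' := fun y t => -(g k c y t))
    (bound := fun t => g k c (x/2) t)
    (x₀ := x) (Metric.ball_mem_nhds x hε) ?_ ?_ ?_ ?_ ?_ ?_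
  · have h2 := hmain.2
    have heq : (fun y : ℝ => ∫ t in Ioi (0:ℝ),
        y ^ (-(k:ℝ)) * (Real.exp (-(c*y) * Real.cosh t) * Real.cosh ((k:ℝ) * t)))
        = fun y => y ^ (-(k:ℝ)) * macdonaldK k (c*y) := by
      funext y
      rw [MeasureTheory.integral_const_mul]
      rfl
    rw [heq] at h2
    have hneg : (∫ t in Ioi (0:ℝ), -(g k c x t)) = -(Gfun k c x) := by
      rw [integral_neg]; rfl
    rwa [hneg] at h2
  · apply Filter.Eventually.of_forall
    intro y
    apply Continuous.aestronglyMeasurable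
    continuity
  · exact (integrableK k (c*x) (by positivity)).const_mul _
  · exact ((g_cont (k:ℝ) c x).neg).aestronglyMeasurable
  · filter_upwards [ae_restrict_mem measurableSet_Ioi] with t ht
    intro y hy
    rw [Metric.mem_ball, Real.dist_eq, abs_lt] at hy
    have hy0 : x/2 < y := by linarith [hy.1]
    rw [norm_neg, Real.norm_eq_abs, abs_of_nonneg (g_nonneg _ _ _ _ (Nat.cast_nonneg k) hc.le (by linarith))]
    have := g_ratio k hk c (x/2) 1 y t hc hε le_rfl (by linarith) (le_of_lt ht)
    simpa using this
  · exact integrable_g (k:ℝ) c (x/2) hc hε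
  · filter_upwards with t
    intro y hy
    rw [Metric.mem_ball, Real.dist_eq, abs_lt] at hy
    have hy0 : 0 < y := by linarith [hy.1]
    have h1 : HasDerivAt (fun y : ℝ => y ^ (-(k:ℝ))) (-(k:ℝ) * y ^ (-(k:ℝ) - 1)) y :=
      Real.hasDerivAt_rpow_const (Or.inl hy0.ne')
    have h2 : HasDerivAt (fun y : ℝ => -(c*y) * Real.cosh t) (-c * Real.cosh t) y := by
      have : HasDerivAt (fun y : ℝ => -(c*y)) (-c) y := by
        simpa using ((hasDerivAt_id y).const_mul (-c))
      simpa using this.mul_const (Real.cosh t)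
    have h3 := (h2.exp).mul_const (Real.cosh ((k:ℝ) * t))
    have h4 := h1.mul h3
    refine h4.congr_deriv ?_
    unfold g
    ring
end S17c

namespace S17d
open S17 S17b S17c

lemma hasDerivAt_Fabs_pos (k : ℕ) (hk : 2 ≤ k) (c x : ℝ) (hc : 0 < c) (hx : 0 < x) :
    HasDerivAt (fun y => |y| ^ (-(k:ℝ)) * macdonaldK k (c*|y|)) (-(Gfun k c x)) x := by
  apply (hasDerivAt_Fval k hk c x hc hx).congr_of_eventuallyEq
  filter_upwards [Ioi_mem_nhds hx] with y hy
  rw [abs_of_pos hy]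

lemma hasDerivAt_Fabs_neg (k : ℕ) (hk : 2 ≤ k) (c x : ℝ) (hc : 0 < c) (hx : x < 0) :
    HasDerivAt (fun y => |y| ^ (-(k:ℝ)) * macdonaldK k (c*|y|)) (Gfun k c (-x)) x := by
  have h := hasDerivAt_Fabs_pos k hk c (-x) hc (by linarith)
  have hcomp := h.comp x (hasDerivAt_neg x)
  have heq : ((fun y => |y| ^ (-(k:ℝ)) * macdonaldK k (c*|y|)) ∘ (fun y : ℝ => -y))
      = (fun y => |y| ^ (-(k:ℝ)) * macdonaldK k (c*|y|)) := by
    funext y; simp [Function.comp, abs_neg]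
  rw [heq] at hcomp
  simpa using hcomp

lemma absF' (k : ℕ) (hk : 2 ≤ k) (c : ℝ) (hc : 0 < c) (F F' : ℝ → ℝ)
    (hF : ∀ ξ : ℝ, F ξ = |ξ| ^ (-(k:ℝ)) * macdonaldK k (c * |ξ|))
    (hF' : ∀ ξ : ℝ, ξ ≠ 0 → HasDerivAt F (F' ξ) ξ)
    (x : ℝ) (hx : x ≠ 0) : |F' x| = Gfun k c |x| := by
  have hFeq : F = fun y => |y| ^ (-(k:ℝ)) * macdonaldK k (c * |y|) := funext hF
  rcases hx.lt_or_gt with h | h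
  · have hd : HasDerivAt F (Gfun k c (-x)) x := by
      rw [hFeq]; exact hasDerivAt_Fabs_neg k hk c x hc h
    have := (hF' x hx).unique hd
    rw [this, abs_of_nonneg (Gfun_nonneg k c (-x) (Nat.cast_nonneg k) hc.le (by linarith)),
      abs_of_neg h]
  · have hd : HasDerivAt F (-(Gfun k c x)) x := by
      rw [hFeq]; exact hasDerivAt_Fabs_pos k hk c x hc h
    have := (hF' x hx).unique hd
    rw [this, abs_neg, abs_of_nonneg (Gfun_nonneg k c x (Nat.cast_nonneg k) hc.le h),
      abs_of_pos h]
end S17d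

namespace S17e
open S17 S17b S17c S17d

noncomputable def bseq (j : ℤ) : ℝ := 9 / (2*|(j:ℝ)| + 1)^2

lemma bseq_nonneg (j : ℤ) : 0 ≤ bseq j := by unfold bseq; positivity

lemma summable_bseq : Summable bseq := by
  have h0 : Summable (fun n : ℕ => 1 / ((n:ℝ))^2) :=
    Real.summable_one_div_nat_pow.2 one_lt_two
  have h1 : Summable (fun n : ℕ => 1 / ((n:ℝ)+1)^2) := by
    have := (summable_nat_add_iff (f := fun n : ℕ => 1 / ((n:ℝ))^2) 1).2 h0
    refine this.congr fun n => ?_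
    push_cast; ring_nf
  have base : Summable (fun n : ℕ => 9 / (2*(n:ℝ) + 1)^2) := by
    apply Summable.of_nonneg_of_le (fun n => by positivity) (fun n => ?_) (h1.mul_left 9)
    have hle : ((n:ℝ)+1)^2 ≤ (2*(n:ℝ)+1)^2 := by nlinarith [Nat.cast_nonneg (α := ℝ) n]
    rw [mul_one_div, div_le_div_iff₀ (by positivity) (by positivity)]
    have hn : (0:ℝ) ≤ (n:ℝ) := Nat.cast_nonneg n
    nlinarith
  apply Summable.of_nat_of_neg
  · refine base.congr fun n => ?_
    simp [bseq]
  · refine base.congr fun n => ?_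
    simp [bseq]

lemma key_ratio (H : ℝ → ℝ)
    (Hnn : ∀ x, 0 < x → 0 ≤ H x)
    (Hratio : ∀ x τ y, 0 < x → 1 ≤ τ → τ * x ≤ y → H y ≤ (τ^2)⁻¹ * H x)
    (ξ : ℝ) (hξ : ξ ≠ 0) (hξπ : |ξ| ≤ π) (j : ℤ) :
    H |ξ + 2*π*j| ≤ bseq j * H |ξ| := by
  have hξ0 : 0 < |ξ| := abs_pos.2 hξ
  by_cases hj : j = 0
  · subst hj
    simp only [bseq, Int.cast_zero, abs_zero, mul_zero, add_zero]
    norm_num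
    nlinarith [Hnn |ξ| hξ0]
  · have hj1 : (1:ℝ) ≤ |(j:ℝ)| := by
      rw [← Int.cast_abs]
      exact_mod_cast Int.one_le_abs (by exact_mod_cast hj)
    have hπ := Real.pi_pos
    set τ := 2*|(j:ℝ)| - 1 with hτdef
    have hτ : 1 ≤ τ := by simp only [hτdef]; linarith
    have harg : τ * |ξ| ≤ |ξ + 2*π*j| := by
      have habs : |2*π*(j:ℝ)| - |ξ| ≤ |ξ + 2*π*(j:ℝ)| := by
        have h := abs_add_le (ξ + 2*π*(j:ℝ)) (-ξ)
        rw [show ξ + 2*π*(j:ℝ) + -ξ = 2*π*(j:ℝ) from by ring, abs_neg] at h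
        linarith
      have h2 : |2*π*(j:ℝ)| = 2*π*|(j:ℝ)| := by
        rw [abs_mul, abs_of_pos (by linarith : (0:ℝ) < 2*π)]
      calc τ * |ξ| ≤ τ * π := mul_le_mul_of_nonneg_left hξπ (by linarith)
        _ = 2*π*|(j:ℝ)| - π := by rw [hτdef]; ring
        _ ≤ |2*π*(j:ℝ)| - |ξ| := by rw [h2]; linarith
        _ ≤ |ξ + 2*π*(j:ℝ)| := habs
    have hmain := Hratio |ξ| τ |ξ + 2*π*(j:ℝ)| hξ0 hτ harg
    have hcoef : (τ^2)⁻¹ ≤ bseq j := by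
      have hτpos : (0:ℝ) < τ := by linarith
      have h9 : (1:ℝ)/τ^2 ≤ 9/(2*|(j:ℝ)|+1)^2 := by
        rw [div_le_div_iff₀ (by positivity) (by positivity), hτdef]
        nlinarith [mul_nonneg (by linarith : (0:ℝ) ≤ 4*|(j:ℝ)|-1)
          (by linarith : (0:ℝ) ≤ |(j:ℝ)|-1)]
      unfold bseq
      rw [← one_div]
      exact h9
    calc H |ξ + 2*π*(j:ℝ)| ≤ (τ^2)⁻¹ * H |ξ| := hmain
      _ ≤ bseq j * H |ξ| := mul_le_mul_of_nonneg_right hcoef (Hnn _ hξ0)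

end S17e

open S17 S17b S17c S17d S17e in
/-- For the multiquadric multipliers `φ̂_k(ξ) = |ξ|^{-k} K_k(c|ξ|)` with `c > 0` fixed and
`k > 1`, the double sum `∑_{m} ∑_{n ≠ m} ∫_{-π}^{π} [φ̂_k(ξ+2πm)/φ̂_k(ξ)] ·
[|φ̂_k'(ξ+2πn)|/|φ̂_k'(ξ)|] dξ` is bounded by a constant independent of `k`. -/
theorem stmt17 (c : ℝ) (hc : 0 < c) :
    ∃ C : ℝ, ∀ (k : ℕ), 1 < k →
      ∀ F F' : ℝ → ℝ,
        (∀ ξ : ℝ, F ξ = |ξ| ^ (-(k : ℝ)) * macdonaldK k (c * |ξ|)) →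
        (∀ ξ : ℝ, ξ ≠ 0 → HasDerivAt F (F' ξ) ξ) →
        ∑' m : ℤ, ∑' n : {n : ℤ // n ≠ m},
            ∫ ξ in Icc (-π) π,
              (F (ξ + 2 * π * m) / F ξ) * (|F' (ξ + 2 * π * ((n : ℤ) : ℝ))| / |F' ξ|) ≤ C := by
  classical
  set S : ℝ := ∑' j : ℤ, bseq j with hS
  have hS0 : 0 ≤ S := tsum_nonneg bseq_nonneg
  refine ⟨2*π*S*S, ?_⟩
  intro k hk1 F F' hF hF'
  have hk : 2 ≤ k := hk1
  have hπ := Real.pi_pos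
  -- abbreviations
  set H1 : ℝ → ℝ := fun x => x ^ (-(k:ℝ)) * macdonaldK k (c*x) with hH1
  set H2 : ℝ → ℝ := fun x => Gfun k c x with hH2
  have hFH1 : ∀ z : ℝ, F z = H1 |z| := by
    intro z; rw [hF z, hH1]
  have hH1nn : ∀ x : ℝ, 0 < x → 0 ≤ H1 x := fun x hx =>
    mul_nonneg (Real.rpow_nonneg hx.le _) (K_nonneg _ _)
  have hH1pos : ∀ x : ℝ, 0 < x → 0 < H1 x := fun x hx =>
    mul_pos (Real.rpow_pos_of_pos hx _) (K_pos _ _ (by positivity))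
  have hH1ratio : ∀ x τ y : ℝ, 0 < x → 1 ≤ τ → τ * x ≤ y → H1 y ≤ (τ^2)⁻¹ * H1 x :=
    fun x τ y hx hτ hy => Fval_ratio k hk c x τ y hc hx hτ hy
  have hH2nn : ∀ x : ℝ, 0 < x → 0 ≤ H2 x := fun x hx =>
    Gfun_nonneg k c x (Nat.cast_nonneg k) hc.le hx
  have hH2pos : ∀ x : ℝ, 0 < x → 0 < H2 x := fun x hx => Gfun_pos k hk c x hc hx
  have hH2ratio : ∀ x τ y : ℝ, 0 < x → 1 ≤ τ → τ * x ≤ y → H2 y ≤ (τ^2)⁻¹ * H2 x :=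
    fun x τ y hx hτ hy => Gfun_ratio k hk c x τ y hc hx hτ hy
  have hFH2 : ∀ z : ℝ, z ≠ 0 → |F' z| = H2 |z| := fun z hz =>
    absF' k hk c hc F F' hF hF' z hz
  -- pointwise bound on the integrand
  have hpt : ∀ (m n : ℤ) (ξ : ℝ), ξ ∈ Icc (-π) π → ξ ≠ 0 →
      (F (ξ + 2 * π * m) / F ξ) * (|F' (ξ + 2 * π * (n:ℝ))| / |F' ξ|)
        ≤ bseq m * bseq n := by
    intro m n ξ hmem hξ
    have hξπ : |ξ| ≤ π := abs_le.2 ⟨hmem.1, hmem.2⟩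
    have hξ0 : 0 < |ξ| := abs_pos.2 hξ
    have hFξ : 0 < F ξ := by rw [hFH1]; exact hH1pos _ hξ0
    have hF'ξ : 0 < |F' ξ| := by rw [hFH2 ξ hξ]; exact hH2pos _ hξ0
    have hshift : ξ + 2 * π * (n:ℝ) ≠ 0 := by
      by_cases hn : n = 0
      · subst hn; simpa using hξ
      · intro habs
        have h1 : (1:ℝ) ≤ |(n:ℝ)| := by
          rw [← Int.cast_abs]
          exact_mod_cast Int.one_le_abs (by exact_mod_cast hn)
        have : |ξ| = 2*π*|(n:ℝ)| := by
          have : ξ = -(2*π*(n:ℝ)) := by linarith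
          rw [this, abs_neg, abs_mul, abs_of_pos (by linarith : (0:ℝ) < 2*π)]
        nlinarith
    have r1 : F (ξ + 2 * π * (m:ℝ)) / F ξ ≤ bseq m := by
      rw [div_le_iff₀ hFξ, hFH1 (ξ + 2*π*(m:ℝ)), hFH1 ξ]
      exact key_ratio H1 hH1nn hH1ratio ξ hξ hξπ m
    have r2 : |F' (ξ + 2 * π * (n:ℝ))| / |F' ξ| ≤ bseq n := by
      rw [div_le_iff₀ hF'ξ, hFH2 _ hshift, hFH2 ξ hξ]
      exact key_ratio H2 hH2nn hH2ratio ξ hξ hξπ n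
    have r2nn : 0 ≤ |F' (ξ + 2 * π * (n:ℝ))| / |F' ξ| :=
      div_nonneg (abs_nonneg _) (abs_nonneg _)
    exact mul_le_mul r1 r2 r2nn (bseq_nonneg m)
  -- nonnegativity of the integrand
  have hptnn : ∀ (m n : ℤ) (ξ : ℝ),
      0 ≤ (F (ξ + 2 * π * m) / F ξ) * (|F' (ξ + 2 * π * (n:ℝ))| / |F' ξ|) := by
    intro m n ξ
    have h1 : 0 ≤ F (ξ + 2*π*(m:ℝ)) := by
      rw [hF]; exact mul_nonneg (Real.rpow_nonneg (abs_nonneg _) _) (K_nonneg _ _)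
    have h2 : 0 ≤ F ξ := by
      rw [hF]; exact mul_nonneg (Real.rpow_nonneg (abs_nonneg _) _) (K_nonneg _ _)
    exact mul_nonneg (div_nonneg h1 h2) (div_nonneg (abs_nonneg _) (abs_nonneg _))
  -- ae ξ ≠ 0
  have hae0 : ∀ᵐ ξ : ℝ ∂(volume.restrict (Icc (-π) π)), ξ ≠ 0 := by
    apply ae_restrict_of_ae
    rw [ae_iff]
    have : {ξ : ℝ | ¬ ξ ≠ 0} = {(0:ℝ)} := by ext x; simp
    rw [this]
    exact Real.volume_singleton
  -- integral bound
  set I : ℤ → ℤ → ℝ := fun m n => ∫ ξ in Icc (-π) π,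
      (F (ξ + 2 * π * m) / F ξ) * (|F' (ξ + 2 * π * (n:ℝ))| / |F' ξ|) with hI
  have hInn : ∀ m n : ℤ, 0 ≤ I m n := fun m n =>
    integral_nonneg (fun ξ => hptnn m n ξ)
  have hIle : ∀ m n : ℤ, I m n ≤ 2*π*(bseq m * bseq n) := by
    intro m n
    have hconst : (∫ _ξ in Icc (-π) π, (bseq m * bseq n)) = 2*π*(bseq m*bseq n) := by
      rw [MeasureTheory.setIntegral_const, Real.volume_real_Icc_of_le (by linarith), smul_eq_mul]
      ring
    rw [← hconst]
    apply integral_mono_of_nonneg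
    · filter_upwards with ξ using hptnn m n ξ
    · exact integrableOn_const (by rw [Real.volume_Icc]; exact ENNReal.ofReal_ne_top)
    · filter_upwards [ae_restrict_mem measurableSet_Icc, hae0] with ξ hmem hξ
      exact hpt m n ξ hmem hξ
  -- inner sums
  have hTle : ∀ m : ℤ, (∑' n : {n : ℤ // n ≠ m}, I m n) ≤ 2*π*S*bseq m := by
    intro m
    have hgsum : Summable (fun n : {n : ℤ // n ≠ m} => 2*π*(bseq m * bseq (n:ℤ))) := by
      have := (summable_bseq.mul_left (2*π*bseq m)).subtype {n : ℤ | n ≠ m}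
      exact this.congr fun n => by simp [Function.comp]; ring
    have hfsum : Summable (fun n : {n : ℤ // n ≠ m} => I m n) :=
      Summable.of_nonneg_of_le (fun n => hInn m n) (fun n => hIle m n) hgsum
    calc (∑' n : {n : ℤ // n ≠ m}, I m n)
        ≤ ∑' n : {n : ℤ // n ≠ m}, 2*π*(bseq m * bseq (n:ℤ)) :=
          Summable.tsum_le_tsum (fun n => hIle m n) hfsum hgsum
      _ = (2*π*bseq m) * ∑' n : {n : ℤ // n ≠ m}, bseq (n:ℤ) := by
          rw [← tsum_mul_left]
          congr 1; funext n; ring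
      _ ≤ (2*π*bseq m) * S := by
          apply mul_le_mul_of_nonneg_left _ (by have := bseq_nonneg m; positivity)
          exact Summable.tsum_subtype_le bseq {n : ℤ | n ≠ m} bseq_nonneg summable_bseq
      _ = 2*π*S*bseq m := by ring
  have hTnn : ∀ m : ℤ, 0 ≤ ∑' n : {n : ℤ // n ≠ m}, I m n := fun m =>
    tsum_nonneg fun n => hInn m n
  have hgsum2 : Summable (fun m : ℤ => 2*π*S*bseq m) := summable_bseq.mul_left _
  have hfsum2 : Summable (fun m : ℤ => ∑' n : {n : ℤ // n ≠ m}, I m n) :=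
    Summable.of_nonneg_of_le hTnn hTle hgsum2
  calc (∑' m : ℤ, ∑' n : {n : ℤ // n ≠ m}, I m n)
      ≤ ∑' m : ℤ, 2*π*S*bseq m := Summable.tsum_le_tsum hTle hfsum2 hgsum2
    _ = 2*π*S*S := by rw [tsum_mul_left]
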